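/- (Well-definedness of the local coordinates ε on the quotient.) For every S = (R_S, x_S) ∈ SE_{e₃}(3) and every state (P, v, pᵢ): (i) the gravity-direction coordinate is invariant, (R_Sᵀ R_P)ᵀ e₃ = R_Pᵀ e₃; (ii) the velocity coordinate v is unchanged by α; and (iii) the body-frame landmark coordinates are invariant, (S⁻¹P)⁻¹( S⁻¹(pᵢ) ) = P⁻¹(pᵢ) for every i. Consequently every component of the chart ε takes the same value on all points of the α-orbit of (P, v, pᵢ). -/

import Mathlib

/-! Elements of `SE_{e₃}(3)` fix `e₃`, so left-multiplying `P` by `S⁻¹` does not move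
`R_Pᵀe₃`; and `S⁻¹` acts on both the pose and the landmarks, so it cancels in
`(S⁻¹P)⁻¹(S⁻¹pᵢ) = P⁻¹ S S⁻¹ pᵢ = P⁻¹pᵢ`. -/

open scoped InnerProductSpace Matrix

noncomputable section

/-- Vectors in ℝ³ with the Euclidean norm. -/
abbrev V3 := EuclideanSpace ℝ (Fin 3)

abbrev Mat3 := Matrix (Fin 3) (Fin 3) ℝ

/-- `R ∈ SO(3)` iff `RᵀR = I` and `det R = 1`. -/
def SO3 (R : Mat3) : Prop := R.transpose * R = 1 ∧ R.det = 1

/-- Matrix-vector multiplication. -/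
def mv (M : Mat3) (q : V3) : V3 := WithLp.toLp 2 (M.mulVec (WithLp.ofLp q))

/-- The standard gravity direction `e₃ = (0,0,1)`. -/
def e3 : V3 := WithLp.toLp 2 ![0, 0, 1]

/-- Elements of SE(3) are pairs `(R, x)`. -/
abbrev SE3 := Mat3 × V3

/-- SE(3) group product: `(R₁,x₁)·(R₂,x₂) = (R₁R₂, x₁ + R₁x₂)`. -/
def seMul (P Q : SE3) : SE3 := (P.1 * Q.1, P.2 + mv P.1 Q.2)

/-- SE(3) identity `(I, 0)`. -/
def seId : SE3 := (1, 0)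

/-- SE(3) inverse: `P⁻¹ = (Rᵀ, −Rᵀx)`. -/
def seInv (P : SE3) : SE3 := (P.1ᵀ, -(mv P.1ᵀ P.2))

/-- Action of SE(3) on ℝ³: `P(q) = R_P q + x_P`. -/
def seAct (P : SE3) (q : V3) : V3 := mv P.1 q + P.2

/-- The subgroup `SE_{e₃}(3) = {(R,x) ∈ SE(3) : R e₃ = e₃}`. -/
def SEe3 : Set SE3 := {S | SO3 S.1 ∧ mv S.1 e3 = e3}

/-- The change-of-reference-frame action `α(S, (P, v, pᵢ)) = (S⁻¹P, v, S⁻¹(pᵢ))`. -/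
def alpha (n : ℕ) (S : SE3) (ξ : SE3 × V3 × (Fin n → V3)) : SE3 × V3 × (Fin n → V3) :=
  (seMul (seInv S) ξ.1, ξ.2.1, fun i => seAct (seInv S) (ξ.2.2 i))

lemma mv_add (M : Mat3) (a b : V3) : mv M (a + b) = mv M a + mv M b := by
  simp only [mv, WithLp.ofLp_add, Matrix.mulVec_add, WithLp.toLp_add]

lemma mv_neg (M : Mat3) (a : V3) : mv M (-a) = -mv M a := by
  simp only [mv, WithLp.ofLp_neg, Matrix.mulVec_neg, WithLp.toLp_neg]

lemma mv_mv (M N : Mat3) (q : V3) : mv M (mv N q) = mv (M * N) q := by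
  simp only [mv, Matrix.mulVec_mulVec]

lemma mv_one (q : V3) : mv 1 q = q := by
  simp only [mv, Matrix.one_mulVec, WithLp.toLp_ofLp]

lemma SO3.mul_transpose {R : Mat3} (hR : SO3 R) : R * Rᵀ = 1 :=
  mul_eq_one_comm.mp hR.1

lemma seAct_seMul (P Q : SE3) (q : V3) : seAct (seMul P Q) q = seAct P (seAct Q q) := by
  simp only [seAct, seMul, mv_add, mv_mv]
  abel

lemma seAct_seAct_seInv {S : SE3} (hS : S.1 * S.1ᵀ = 1) (q : V3) :
    seAct S (seAct (seInv S) q) = q := by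
  simp only [seAct, seInv, mv_add, mv_neg, mv_mv, hS, mv_one]
  abel

lemma seInv_seMul_seInv {S : SE3} (hS : S.1 * S.1ᵀ = 1) (P : SE3) :
    seInv (seMul (seInv S) P) = seMul (seInv P) S := by
  simp only [seInv, seMul, Matrix.transpose_mul, Matrix.transpose_transpose, mv_add, mv_neg,
    mv_mv, Matrix.mul_assoc, hS, Matrix.mul_one, Prod.mk.injEq, true_and]
  abel

lemma seAct_seInv_seMul_seInv {S : SE3} (hS : S.1 * S.1ᵀ = 1) (P : SE3) (q : V3) :
    seAct (seInv (seMul (seInv S) P)) (seAct (seInv S) q) = seAct (seInv P) q := by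
  rw [seInv_seMul_seInv hS, seAct_seMul, seAct_seAct_seInv hS]

lemma mv_transpose_seMul_seInv_of_mv_eq {S : SE3} {u : V3} (hu : mv S.1 u = u) (P : SE3) :
    mv (seMul (seInv S) P).1ᵀ u = mv P.1ᵀ u := by
  simp only [seMul, seInv, Matrix.transpose_mul, Matrix.transpose_transpose, ← mv_mv, hu]

theorem chart_invariant_general (n : ℕ) (TC : SE3)
    (S : SE3) (hS : S ∈ SEe3)
    (P : SE3) (v : V3) (p : Fin n → V3)
    (P0 : SE3) (v0 : V3) (p0 : Fin n → V3) :
    (mv ((seMul (seInv S) P).1)ᵀ e3 = mv P.1ᵀ e3) ∧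
    ((alpha n S (P, v, p)).2.1 = v) ∧
    (∀ i, seAct (seInv (seMul (seInv S) P)) (seAct (seInv S) (p i)) = seAct (seInv P) (p i)) ∧
    (∀ θ : V3 → EuclideanSpace ℝ (Fin 2),
      θ (mv ((seMul (seInv S) P).1)ᵀ e3) = θ (mv P.1ᵀ e3)) ∧
    ((alpha n S (P, v, p)).2.1 - v0 = v - v0) ∧
    (∀ i, seAct (seInv TC)
        (seAct (seInv (seMul (seInv S) P)) (seAct (seInv S) (p i)) - seAct (seInv P0) (p0 i))
      = seAct (seInv TC) (seAct (seInv P) (p i) - seAct (seInv P0) (p0 i))) := by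
  obtain ⟨hSO3, hSe3⟩ := hS
  have gravity := mv_transpose_seMul_seInv_of_mv_eq hSe3 P
  have landmark i := seAct_seInv_seMul_seInv hSO3.mul_transpose P (p i)
  exact ⟨gravity, rfl, landmark, fun θ => by rw [gravity], rfl, fun i => by rw [landmark i]⟩

/-- (Well-definedness of the local coordinates `ε` on the quotient.)
For every `S ∈ SE_{e₃}(3)`: (i) `(R_SᵀR_P)ᵀe₃ = R_Pᵀe₃`; (ii) the velocity coordinate is
unchanged by `α`; (iii) `(S⁻¹P)⁻¹(S⁻¹(pᵢ)) = P⁻¹(pᵢ)`; consequently every component of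
the chart `ε` takes the same value on all points of the `α`-orbit. -/
theorem chart_invariant (n : ℕ) (hn : 1 ≤ n) (TC : SE3) (hTC : SO3 TC.1)
    (S : SE3) (hS : S ∈ SEe3)
    (P : SE3) (hP : SO3 P.1) (v : V3) (p : Fin n → V3)
    (P0 : SE3) (hP0 : SO3 P0.1) (v0 : V3) (p0 : Fin n → V3) :
    (mv ((seMul (seInv S) P).1)ᵀ e3 = mv P.1ᵀ e3) ∧
    ((alpha n S (P, v, p)).2.1 = v) ∧
    (∀ i, seAct (seInv (seMul (seInv S) P)) (seAct (seInv S) (p i)) = seAct (seInv P) (p i)) ∧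
    (∀ θ : V3 → EuclideanSpace ℝ (Fin 2),
      θ (mv ((seMul (seInv S) P).1)ᵀ e3) = θ (mv P.1ᵀ e3)) ∧
    ((alpha n S (P, v, p)).2.1 - v0 = v - v0) ∧
    (∀ i, seAct (seInv TC)
        (seAct (seInv (seMul (seInv S) P)) (seAct (seInv S) (p i)) - seAct (seInv P0) (p0 i))
      = seAct (seInv TC) (seAct (seInv P) (p i) - seAct (seInv P0) (p0 i))) :=
  chart_invariant_general n TC S hS P v p P0 v0 p0
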